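/- arXiv:2006.04735 — 4 statements merged into one kernel-verified Lean document; each statement's English description precedes it below -/
import Mathlib

section
/- Let 0 < μ ≤ 2L and ζ > 0 and consider the one-dimensional quadratics φ_1(u) = (L/2)u² + ζu and φ_2(u) = (μ/2)u² − ζu. Run deterministic two-machine Local SGD: starting from u_{0,0}^{(1)} = u_{0,0}^{(2)} = 0, in each of R rounds machine 1 performs K exact gradient steps u_{k+1,r}^{(1)} = u_{k,r}^{(1)} − η·(L·u_{k,r}^{(1)} + ζ) and machine 2 performs K steps u_{k+1,r}^{(2)} = u_{k,r}^{(2)} − η·(μ·u_{k,r}^{(2)} − ζ), after which both machines are reset to the average; let û denote the final average. Then if the fixed stepsize satisfies η ≤ 1/L and (1 − μη)^K ≤ (L − μ)/L, one has û ≥ (ζ/(2μ))·((L − μ)/L − (1 − μη)^K), and consequently ((L + μ)/4)·û² ≥ (ζ²(L + μ)/(16μ²))·((L − μ)/L − (1 − μη)^K)². -/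
/-!
Both machines start every round at the same point `u_r`, and on a one-dimensional quadratic
`K` gradient steps act affinely with factor `(1 - η a)^K`. Hence the averages obey
`u_{r+1} = c u_r + b` with `c = ((1 - ηL)^K + (1 - μη)^K)/2` and an offset `b` that exceeds the
claimed bound `T` by `ζ(1 - ηL)^K/(2L) ≥ 0`. If `1 - μη ≥ 0` then `c ≥ 0`, so `u_r ≥ 0` for all
`r` and `u_R ≥ b ≥ T`. If `1 - μη < 0`, then `μη ≤ 2` gives `(1 - μη)^K ≥ 1 - μη`, which forces
`b ≤ 0`; so `b = 0`, all averages vanish and `T ≤ b = 0 = u_R`.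
-/

theorem self_le_pow_of_neg_one_le_of_nonpos {R : Type*} [Ring R] [LinearOrder R]
    [IsStrictOrderedRing R] {x : R} (h1 : -1 ≤ x) (h0 : x ≤ 0) {n : ℕ} (hn : n ≠ 0) :
    x ≤ x ^ n := by
  obtain ⟨m, rfl⟩ := Nat.exists_eq_succ_of_ne_zero hn
  have hm : x ^ m ≤ 1 := by
    calc x ^ m ≤ |x ^ m| := le_abs_self _
      _ = |x| ^ m := abs_pow x m
      _ ≤ 1 := pow_le_one₀ (abs_nonneg x) (abs_le.2 ⟨h1, h0.trans zero_le_one⟩)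
  calc x = x * 1 := (mul_one x).symm
    _ ≤ x * x ^ m := mul_le_mul_of_nonpos_left hm h0
    _ = x ^ m.succ := (pow_succ' x m).symm

theorem gd_quadratic_eq {x : ℕ → ℝ} {a z η : ℝ} (ha : a ≠ 0)
    (hx : ∀ k, x (k + 1) = x k - η * (a * x k + z)) (k : ℕ) :
    x k = (1 - η * a) ^ k * (x 0 + z / a) - z / a := by
  induction k with
  | zero => ring
  | succ k ih =>
    rw [hx, ih]
    field_simp
    ring

theorem le_affine_iterate {u : ℕ → ℝ} {b c : ℝ} (h0 : u 0 = 0)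
    (hu : ∀ r, u (r + 1) = c * u r + b) (hb : 0 ≤ b) (hcb : 0 ≤ c ∨ b ≤ 0) {R : ℕ}
    (hR : 1 ≤ R) : b ≤ u R := by
  obtain ⟨n, rfl⟩ := Nat.exists_eq_add_of_le' hR
  rcases hcb with hc | hb'
  · have hnonneg : ∀ r, 0 ≤ u r := by
      intro r
      induction r with
      | zero => exact h0.ge
      | succ r ih => rw [hu]; positivity
    rw [hu]
    exact le_add_of_nonneg_left (mul_nonneg hc (hnonneg n))
  · have hzero : ∀ r, u r = 0 := by
      intro r
      induction r with
      | zero => exact h0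
      | succ r ih => rw [hu, ih, le_antisymm hb' hb, mul_zero, add_zero]
    rw [hzero]
    exact hb'

theorem local_sgd_offset_nonpos_of_one_lt_mul {μ L ζ η : ℝ} {K : ℕ} (hμ : 0 < μ) (hL : 0 < L)
    (hζ : 0 ≤ ζ) (hμL : μ ≤ 2 * L) (hη : η ≤ 1 / L) (hK : K ≠ 0) (hμη : 1 < μ * η) :
    ζ * (1 - η * L) ^ K / (2 * L) + ζ / (2 * μ) * ((L - μ) / L - (1 - μ * η) ^ K) ≤ 0 := by
  have hηL : η * L ≤ 1 := (le_div_iff₀ hL).mp hη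
  have hη0 : 0 ≤ η := by nlinarith
  have hμη2 : μ * η ≤ 2 :=
    calc μ * η ≤ μ * (1 / L) := mul_le_mul_of_nonneg_left hη hμ.le
      _ ≤ 2 := by rw [mul_one_div, div_le_iff₀ hL]; exact hμL
  have hβ : 1 - μ * η ≤ (1 - μ * η) ^ K :=
    self_le_pow_of_neg_one_le_of_nonpos (by linarith) (by linarith) hK
  have hα : (1 - η * L) ^ K ≤ 1 - η * L :=
    pow_le_of_le_one (by linarith) (sub_le_self _ (mul_nonneg hη0 hL.le)) hK
  have hgap : L * (1 - (1 - μ * η) ^ K) ≤ μ * (1 - (1 - η * L) ^ K) := by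
    nlinarith [mul_le_mul_of_nonneg_left hβ hL.le, mul_le_mul_of_nonneg_left hα hμ.le]
  have hoffset : ζ * (1 - η * L) ^ K / (2 * L) + ζ / (2 * μ) * ((L - μ) / L - (1 - μ * η) ^ K)
      = ζ / (2 * μ * L) * (L * (1 - (1 - μ * η) ^ K) - μ * (1 - (1 - η * L) ^ K)) := by
    field_simp
    ring
  rw [hoffset]
  exact mul_nonpos_of_nonneg_of_nonpos (by positivity) (by linarith)

theorem local_sgd_round_eq {μ L ζ η : ℝ} {K : ℕ} {v1 v2 : ℕ → ℕ → ℝ} (hμ : μ ≠ 0)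
    (hL : L ≠ 0) (h0 : v1 0 0 = v2 0 0)
    (hrec1 : ∀ r k : ℕ, v1 r (k + 1) = v1 r k - η * (L * v1 r k + ζ))
    (hrec2 : ∀ r k : ℕ, v2 r (k + 1) = v2 r k - η * (μ * v2 r k - ζ))
    (hreset1 : ∀ r : ℕ, v1 (r + 1) 0 = (v1 r K + v2 r K) / 2)
    (hreset2 : ∀ r : ℕ, v2 (r + 1) 0 = (v1 r K + v2 r K) / 2) (r : ℕ) :
    v1 (r + 1) 0 = ((1 - η * L) ^ K + (1 - μ * η) ^ K) / 2 * v1 r 0 +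
      (ζ * (1 - η * L) ^ K / (2 * L) + ζ / (2 * μ) * ((L - μ) / L - (1 - μ * η) ^ K)) := by
  have hagree : v2 r 0 = v1 r 0 := by
    cases r with
    | zero => exact h0.symm
    | succ r => rw [hreset1, hreset2]
  rw [hreset1, gd_quadratic_eq hL (hrec1 r) K,
    gd_quadratic_eq (x := v2 r) (z := -ζ) hμ (fun k => by rw [hrec2]; ring) K, hagree]
  field_simp
  ring

/-- The fourth-coordinate lemma: deterministic two-machine Local SGD on the
one-dimensional quadratics `φ₁(u) = (L/2)u² + ζu` and `φ₂(u) = (μ/2)u² - ζu`, started at `0`,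
with `K` local steps per round and `R` rounds, produces a final average `û` satisfying
`û ≥ (ζ/(2μ)) ((L-μ)/L - (1-μη)^K)` whenever `η ≤ 1/L` and `(1-μη)^K ≤ (L-μ)/L`, and
consequently `((L+μ)/4) û² ≥ (ζ²(L+μ)/(16μ²)) ((L-μ)/L - (1-μη)^K)²`. -/
theorem local_sgd_fourth_coordinate_lower_bound
    (μ L ζ η : ℝ) (K R : ℕ)
    (hμ : 0 < μ) (hμL : μ ≤ 2 * L) (hζ : 0 < ζ) (hR : 1 ≤ R)
    (hη : η ≤ 1 / L)
    (hcontract : (1 - μ * η) ^ K ≤ (L - μ) / L)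
    (v1 v2 : ℕ → ℕ → ℝ)
    (h10 : v1 0 0 = 0) (h20 : v2 0 0 = 0)
    (hrec1 : ∀ r k : ℕ, v1 r (k + 1) = v1 r k - η * (L * v1 r k + ζ))
    (hrec2 : ∀ r k : ℕ, v2 r (k + 1) = v2 r k - η * (μ * v2 r k - ζ))
    (hreset1 : ∀ r : ℕ, v1 (r + 1) 0 = (v1 r K + v2 r K) / 2)
    (hreset2 : ∀ r : ℕ, v2 (r + 1) 0 = (v1 r K + v2 r K) / 2)
    (uhat : ℝ) (huhat : uhat = v1 R 0) :
    uhat ≥ (ζ / (2 * μ)) * ((L - μ) / L - (1 - μ * η) ^ K) ∧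
      ((L + μ) / 4) * uhat ^ 2 ≥
        (ζ ^ 2 * (L + μ) / (16 * μ ^ 2)) * ((L - μ) / L - (1 - μ * η) ^ K) ^ 2 := by
  have hL : 0 < L := by linarith
  have hK : K ≠ 0 := by
    rintro rfl
    rw [pow_zero, le_div_iff₀ hL] at hcontract
    linarith
  have hα : 0 ≤ 1 - η * L := sub_nonneg.2 ((le_div_iff₀ hL).mp hη)
  have hT : 0 ≤ ζ / (2 * μ) * ((L - μ) / L - (1 - μ * η) ^ K) :=
    mul_nonneg (by positivity) (sub_nonneg.2 hcontract)
  have hlow : ζ / (2 * μ) * ((L - μ) / L - (1 - μ * η) ^ K) ≤ uhat := by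
    rw [huhat]
    refine (le_add_of_nonneg_left (by positivity)).trans (le_affine_iterate (u := fun r => v1 r 0)
      h10 (local_sgd_round_eq hμ.ne' hL.ne' (h10.trans h20.symm) hrec1 hrec2 hreset1 hreset2)
      (by positivity) ?_ hR)
    rcases le_or_gt (μ * η) 1 with hμη | hμη
    · have hβ : 0 ≤ (1 - μ * η) ^ K := pow_nonneg (by linarith) K
      exact .inl (by positivity)
    · exact .inr (local_sgd_offset_nonpos_of_one_lt_mul hμ hL hζ.le hμL hη hK hμη)
  refine ⟨hlow, ?_⟩
  calc (ζ ^ 2 * (L + μ) / (16 * μ ^ 2)) * ((L - μ) / L - (1 - μ * η) ^ K) ^ 2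
      = (L + μ) / 4 * (ζ / (2 * μ) * ((L - μ) / L - (1 - μ * η) ^ K)) ^ 2 := by
        field_simp
        ring
    _ ≤ (L + μ) / 4 * uhat ^ 2 := by gcongr
end

section
/- Let 0 ≤ λ < H, let C and β be real constants, let d be even, and define F_1(x) = ((H−λ)/8)·(x_1² − 2Cx_1 + βx_d² + Σ_{i=1}^{d/2−1}(x_{2i+1} − x_{2i})²) + (λ/2)‖x‖² and F_2(x) = ((H−λ)/8)·Σ_{i=1}^{d/2}(x_{2i} − x_{2i−1})² + (λ/2)‖x‖² on R^d. Consider any distributed zero-respecting algorithm with two machines, where machine 1 queries exact gradients of F_1 and machine 2 queries exact gradients of F_2, initialized at 0. Then after R rounds of communication between the two machines, every query point on each machine, and hence the algorithm's output x̂, lies in E_R = span{e_1, …, e_R}, i.e. all coordinates beyond the R-th are zero. -/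
/-!
Both objectives are `λ/2 ‖x‖²` plus squares of linear forms in the coordinates. With 0-based
indices, the chain terms of `F₁` couple coordinates `2i - 1` and `2i`, those of `F₂` couple
`2i - 2` and `2i - 1`, and the linear term of `F₁` only involves coordinate `0`. Hence no term of
`F₁` straddles an odd boundary `k` and no term of `F₂` an even one, so `∇F₁` maps `E_k` into
itself for odd `k` and `∇F₂` does so for even `k`. A zero-respecting machine can thus leave such
an `E_k` only through gradients of the other machine, which arrive one round later. By induction
on the queries, in round `r` machine 1 queries in `E_{2⌊r/2⌋+1}` and machine 2 in `E_{2⌈r/2⌉}`,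
and both lie in `E_{r+1} ⊆ E_R`.
-/

section

variable {d : ℕ}

/-- `E_k` of the paper: indices are 0-based, so `e_1, …, e_k` are the `single i 1` with `i < k`. -/
def prefixSubspace (d k : ℕ) : Submodule ℝ (EuclideanSpace ℝ (Fin d)) where
  carrier := {x | ∀ i : Fin d, k ≤ i → x i = 0}
  add_mem' hx hy i hi := by simp [hx i hi, hy i hi]
  zero_mem' _ _ := rfl
  smul_mem' c x hx i hi := by simp [hx i hi]

lemma prefixSubspace_mono : Monotone (prefixSubspace d) :=
  fun _ _ hkl _ hx i hi => hx i (hkl.trans hi)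

lemma mem_prefixSubspace_of_forall_ne_zero {k : ℕ} {y : EuclideanSpace ℝ (Fin d)}
    (hy : ∀ i, y i ≠ 0 → ∃ z ∈ prefixSubspace d k, z i ≠ 0) : y ∈ prefixSubspace d k := by
  intro i hi
  by_contra hyi
  obtain ⟨z, hz, hzi⟩ := hy i hyi
  exact hzi (hz i hi)

def tailAnnihilator (d k : ℕ) : Submodule ℝ (EuclideanSpace ℝ (Fin d) →L[ℝ] ℝ) where
  carrier := {φ | ∀ i : Fin d, k ≤ i → φ (EuclideanSpace.single i 1) = 0}
  add_mem' hφ hψ i hi := by simp [hφ i hi, hψ i hi]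
  zero_mem' _ _ := rfl
  smul_mem' c φ hφ i hi := by simp [hφ i hi]

lemma innerSL_mem_tailAnnihilator {k : ℕ} {x : EuclideanSpace ℝ (Fin d)}
    (hx : x ∈ prefixSubspace d k) : innerSL ℝ x ∈ tailAnnihilator d k := by
  intro i hi
  simp [EuclideanSpace.inner_single_right, hx i hi]

noncomputable def coordCLM (d k : ℕ) : EuclideanSpace ℝ (Fin d) →L[ℝ] ℝ :=
  if h : k < d then EuclideanSpace.proj (⟨k, h⟩ : Fin d) else 0

lemma coordCLM_apply (k : ℕ) (x : EuclideanSpace ℝ (Fin d)) :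
    coordCLM d k x = if h : k < d then x ⟨k, h⟩ else 0 := by
  unfold coordCLM
  split <;> simp

lemma coordCLM_mem_tailAnnihilator {a k : ℕ} (hak : a < k) :
    coordCLM d a ∈ tailAnnihilator d k := by
  intro i hi
  rw [coordCLM_apply]
  split
  · rw [PiLp.single_apply, if_neg (by rw [Fin.ext_iff, Fin.val_mk]; omega)]
  · rfl

lemma coordCLM_apply_eq_zero {a k : ℕ} (hka : k ≤ a) {x : EuclideanSpace ℝ (Fin d)}
    (hx : x ∈ prefixSubspace d k) : coordCLM d a x = 0 := by
  rw [coordCLM_apply]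
  split
  · exact hx _ hka
  · rfl

lemma coordCLM_mem_or_forall_apply_eq_zero (a k : ℕ) :
    coordCLM d a ∈ tailAnnihilator d k ∨ ∀ x ∈ prefixSubspace d k, coordCLM d a x = 0 := by
  rcases lt_or_ge a k with hak | hka
  · exact .inl (coordCLM_mem_tailAnnihilator hak)
  · exact .inr fun x hx => coordCLM_apply_eq_zero hka hx

lemma coordCLM_sub_mem_or_forall_apply_eq_zero {a b k : ℕ} (hab : a < k ↔ b < k) :
    coordCLM d a - coordCLM d b ∈ tailAnnihilator d k ∨
      ∀ x ∈ prefixSubspace d k, (coordCLM d a - coordCLM d b) x = 0 := by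
  rcases lt_or_ge a k with hak | hka
  · exact .inl (sub_mem (coordCLM_mem_tailAnnihilator hak)
      (coordCLM_mem_tailAnnihilator (hab.mp hak)))
  · refine .inr fun x hx => ?_
    rw [sub_apply, coordCLM_apply_eq_zero hka hx,
      coordCLM_apply_eq_zero (not_lt.mp (hab.not.mp hka.not_gt)) hx, sub_zero]

/-- A differentiability-carrying form of `Set.MapsTo (gradient f) E_k E_k` that is stable under
sums and scalar multiples. -/
def GradientPreservesPrefix (k : ℕ) (f : EuclideanSpace ℝ (Fin d) → ℝ) : Prop :=
  ∀ x ∈ prefixSubspace d k, ∃ φ ∈ tailAnnihilator d k, HasFDerivAt f φ x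

namespace GradientPreservesPrefix

variable {k : ℕ} {f g : EuclideanSpace ℝ (Fin d) → ℝ}

lemma mapsTo_gradient (hf : GradientPreservesPrefix k f) :
    Set.MapsTo (gradient f) (prefixSubspace d k) (prefixSubspace d k) := fun x hx => by
  obtain ⟨φ, hφ, hfφ⟩ := hf x hx
  intro i hi
  have := inner_gradient_left (𝕜 := ℝ) (f := f) (x := x) (y := EuclideanSpace.single i 1)
  rw [hfφ.fderiv, hφ i hi, EuclideanSpace.inner_single_right] at this
  simpa using this

lemma add (hf : GradientPreservesPrefix k f) (hg : GradientPreservesPrefix k g) :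
    GradientPreservesPrefix k (fun y => f y + g y) := fun x hx => by
  obtain ⟨φ, hφ, hfφ⟩ := hf x hx
  obtain ⟨ψ, hψ, hgψ⟩ := hg x hx
  exact ⟨φ + ψ, add_mem hφ hψ, hfφ.add hgψ⟩

lemma sub (hf : GradientPreservesPrefix k f) (hg : GradientPreservesPrefix k g) :
    GradientPreservesPrefix k (fun y => f y - g y) := fun x hx => by
  obtain ⟨φ, hφ, hfφ⟩ := hf x hx
  obtain ⟨ψ, hψ, hgψ⟩ := hg x hx
  exact ⟨φ - ψ, sub_mem hφ hψ, hfφ.sub hgψ⟩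

lemma const_mul (hf : GradientPreservesPrefix k f) (c : ℝ) :
    GradientPreservesPrefix k (fun y => c * f y) := fun x hx => by
  obtain ⟨φ, hφ, hfφ⟩ := hf x hx
  exact ⟨c • φ, Submodule.smul_mem _ c hφ, hfφ.const_mul c⟩

lemma sum {ι : Type*} {s : Finset ι} {f : ι → EuclideanSpace ℝ (Fin d) → ℝ}
    (hf : ∀ j ∈ s, GradientPreservesPrefix k (f j)) :
    GradientPreservesPrefix k (fun y => ∑ j ∈ s, f j y) := fun x hx => by
  choose! φ hφ hfφ using fun j hj => hf j hj x hx
  exact ⟨∑ j ∈ s, φ j, sum_mem hφ, HasFDerivAt.fun_sum hfφ⟩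

end GradientPreservesPrefix

lemma gradientPreservesPrefix_clm {k : ℕ} {ℓ : EuclideanSpace ℝ (Fin d) →L[ℝ] ℝ}
    (hℓ : ℓ ∈ tailAnnihilator d k) : GradientPreservesPrefix k ℓ :=
  fun _ _ => ⟨ℓ, hℓ, ℓ.hasFDerivAt⟩

lemma gradientPreservesPrefix_sq {k : ℕ} {ℓ : EuclideanSpace ℝ (Fin d) →L[ℝ] ℝ}
    (hℓ : ℓ ∈ tailAnnihilator d k ∨ ∀ x ∈ prefixSubspace d k, ℓ x = 0) :
    GradientPreservesPrefix k (fun y => ℓ y ^ 2) := fun x hx => by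
  refine ⟨_, ?_, ℓ.hasFDerivAt.pow 2⟩
  rcases hℓ with hℓ | hℓ
  · exact Submodule.smul_mem _ _ hℓ
  · simp [hℓ x hx]

lemma gradientPreservesPrefix_norm_sq (k : ℕ) :
    GradientPreservesPrefix k (fun y : EuclideanSpace ℝ (Fin d) => ‖y‖ ^ 2) := fun x hx =>
  ⟨_, nsmul_mem (innerSL_mem_tailAnnihilator hx) 2,
    (hasStrictFDerivAt_norm_sq x).hasFDerivAt⟩

lemma gradientPreservesPrefix_F₁_of_odd {k : ℕ} (hk : Odd k) {H lam C β : ℝ}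
    {F₁ : EuclideanSpace ℝ (Fin d) → ℝ}
    (hF₁ : ∀ y, F₁ y = (H - lam) / 8 *
      ((coordCLM d 0 y) ^ 2 - 2 * C * coordCLM d 0 y + β * (coordCLM d (d - 1) y) ^ 2 +
        ∑ i ∈ Finset.Icc 1 (d / 2 - 1), (coordCLM d (2 * i) y - coordCLM d (2 * i - 1) y) ^ 2) +
      lam / 2 * ‖y‖ ^ 2) :
    GradientPreservesPrefix k F₁ := by
  obtain rfl := funext hF₁
  obtain ⟨m, rfl⟩ := hk
  refine .add (.const_mul (.add (.add (.sub ?_ (.const_mul ?_ _)) (.const_mul ?_ _))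
    (.sum fun i hi => ?_)) _) (.const_mul (gradientPreservesPrefix_norm_sq _) _)
  · exact gradientPreservesPrefix_sq (coordCLM_mem_or_forall_apply_eq_zero _ _)
  · exact gradientPreservesPrefix_clm (coordCLM_mem_tailAnnihilator (by omega))
  · exact gradientPreservesPrefix_sq (coordCLM_mem_or_forall_apply_eq_zero _ _)
  · have hi : 1 ≤ i := (Finset.mem_Icc.mp hi).1
    exact gradientPreservesPrefix_sq (coordCLM_sub_mem_or_forall_apply_eq_zero (by omega))

lemma gradientPreservesPrefix_F₂_of_even {k : ℕ} (hk : Even k) {H lam : ℝ}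
    {F₂ : EuclideanSpace ℝ (Fin d) → ℝ}
    (hF₂ : ∀ y, F₂ y = (H - lam) / 8 *
      (∑ i ∈ Finset.Icc 1 (d / 2), (coordCLM d (2 * i - 1) y - coordCLM d (2 * i - 2) y) ^ 2) +
      lam / 2 * ‖y‖ ^ 2) :
    GradientPreservesPrefix k F₂ := by
  obtain rfl := funext hF₂
  obtain ⟨m, rfl⟩ := hk
  refine .add (.const_mul (.sum fun i hi => ?_) _)
    (.const_mul (gradientPreservesPrefix_norm_sq _) _)
  have hi : 1 ≤ i := (Finset.mem_Icc.mp hi).1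
  exact gradientPreservesPrefix_sq (coordCLM_sub_mem_or_forall_apply_eq_zero (by omega))

theorem mem_prefixSubspace_of_zeroRespecting
    {g₁ g₂ : EuclideanSpace ℝ (Fin d) → EuclideanSpace ℝ (Fin d)}
    {ℓ₁ ℓ₂ : ℕ → ℕ} (hℓ₁ : Monotone ℓ₁) (hℓ₂ : Monotone ℓ₂)
    (hℓ₁₂ : ∀ r r', r < r' → ℓ₁ r ≤ ℓ₂ r') (hℓ₂₁ : ∀ r r', r < r' → ℓ₂ r ≤ ℓ₁ r')
    (hg₁ : ∀ r, Set.MapsTo g₁ (prefixSubspace d (ℓ₁ r)) (prefixSubspace d (ℓ₁ r)))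
    (hg₂ : ∀ r, Set.MapsTo g₂ (prefixSubspace d (ℓ₂ r)) (prefixSubspace d (ℓ₂ r)))
    {x1 x2 : ℕ → EuclideanSpace ℝ (Fin d)} {round : ℕ → ℕ} (hmono : Monotone round)
    (hZR1 : ∀ (t : ℕ) (i : Fin d), x1 t i ≠ 0 →
      (∃ s, s < t ∧ g₁ (x1 s) i ≠ 0) ∨ (∃ s, round s < round t ∧ g₂ (x2 s) i ≠ 0))
    (hZR2 : ∀ (t : ℕ) (i : Fin d), x2 t i ≠ 0 →
      (∃ s, s < t ∧ g₂ (x2 s) i ≠ 0) ∨ (∃ s, round s < round t ∧ g₁ (x1 s) i ≠ 0))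
    (t : ℕ) :
    x1 t ∈ prefixSubspace d (ℓ₁ (round t)) ∧ x2 t ∈ prefixSubspace d (ℓ₂ (round t)) := by
  induction t using Nat.strong_induction_on with
  | _ t ih =>
    have lt_of_round_lt {s} (hs : round s < round t) : s < t := hmono.reflect_lt hs
    constructor <;> refine mem_prefixSubspace_of_forall_ne_zero fun i hi => ?_
    · rcases hZR1 t i hi with ⟨s, hst, hs⟩ | ⟨s, hst, hs⟩
      · exact ⟨_, prefixSubspace_mono (hℓ₁ (hmono hst.le)) (hg₁ _ (ih s hst).1), hs⟩
      · exact ⟨_, prefixSubspace_mono (hℓ₂₁ _ _ hst) (hg₂ _ (ih s (lt_of_round_lt hst)).2), hs⟩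
    · rcases hZR2 t i hi with ⟨s, hst, hs⟩ | ⟨s, hst, hs⟩
      · exact ⟨_, prefixSubspace_mono (hℓ₂ (hmono hst.le)) (hg₂ _ (ih s hst).2), hs⟩
      · exact ⟨_, prefixSubspace_mono (hℓ₁₂ _ _ hst) (hg₁ _ (ih s (lt_of_round_lt hst)).1), hs⟩

end

theorem distributed_zero_respecting_span_lemma_general
    (d : ℕ)
    (H lam C β : ℝ)
    -- `coord x k` is the `(k+1)`-st coordinate of `x` (i.e. `x_{k+1}` in 1-indexed notation)
    (coord : EuclideanSpace ℝ (Fin d) → ℕ → ℝ)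
    (hcoord : ∀ (x : EuclideanSpace ℝ (Fin d)) (k : ℕ),
      coord x k = if h : k < d then x ⟨k, h⟩ else 0)
    (F₁ F₂ : EuclideanSpace ℝ (Fin d) → ℝ)
    (hF₁ : ∀ x, F₁ x = (H - lam) / 8 *
      ((coord x 0) ^ 2 - 2 * C * coord x 0 + β * (coord x (d - 1)) ^ 2 +
        ∑ i ∈ Finset.Icc 1 (d / 2 - 1), (coord x (2 * i) - coord x (2 * i - 1)) ^ 2) +
      lam / 2 * ‖x‖ ^ 2)
    (hF₂ : ∀ x, F₂ x = (H - lam) / 8 *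
      (∑ i ∈ Finset.Icc 1 (d / 2), (coord x (2 * i - 1) - coord x (2 * i - 2)) ^ 2) +
      lam / 2 * ‖x‖ ^ 2)
    -- the algorithm: query points `x1 t`, `x2 t` (the `t`-th query on machines 1 and 2),
    -- `round t` is the round during which the `t`-th query is made; there are `R` rounds
    (R : ℕ)
    (x1 x2 : ℕ → EuclideanSpace ℝ (Fin d))
    (xhat : EuclideanSpace ℝ (Fin d))
    (round : ℕ → ℕ) (hmono : Monotone round) (hround : ∀ t, round t < R)
    -- the algorithm is distributed zero-respecting: each machine's queries are supported on
    -- coordinates where a previously seen gradient (its own, or one communicated from the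
    -- other machine at the end of a strictly earlier round) was nonzero
    (hZR1 : ∀ (t : ℕ) (i : Fin d), x1 t i ≠ 0 →
      (∃ s, s < t ∧ gradient F₁ (x1 s) i ≠ 0) ∨
      (∃ s, round s < round t ∧ gradient F₂ (x2 s) i ≠ 0))
    (hZR2 : ∀ (t : ℕ) (i : Fin d), x2 t i ≠ 0 →
      (∃ s, s < t ∧ gradient F₂ (x2 s) i ≠ 0) ∨
      (∃ s, round s < round t ∧ gradient F₁ (x1 s) i ≠ 0))
    -- the output, produced after the `R`-th communication, is zero-respecting
    (hZRout : ∀ i : Fin d, xhat i ≠ 0 →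
      (∃ s, gradient F₁ (x1 s) i ≠ 0) ∨ (∃ s, gradient F₂ (x2 s) i ≠ 0)) :
    (∀ (t : ℕ) (i : Fin d), R ≤ (i : ℕ) → x1 t i = 0 ∧ x2 t i = 0) ∧
      (∀ i : Fin d, R ≤ (i : ℕ) → xhat i = 0) := by
  obtain rfl : coord = fun x k => coordCLM d k x := by
    funext x k
    rw [hcoord, coordCLM_apply]
  set ℓ₁ : ℕ → ℕ := fun r => 2 * (r / 2) + 1
  set ℓ₂ : ℕ → ℕ := fun r => 2 * ((r + 1) / 2)
  have hg₁ (r : ℕ) : Set.MapsTo (gradient F₁) (prefixSubspace d (ℓ₁ r)) (prefixSubspace d (ℓ₁ r)) :=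
    (gradientPreservesPrefix_F₁_of_odd (odd_two_mul_add_one _) hF₁).mapsTo_gradient
  have hg₂ (r : ℕ) : Set.MapsTo (gradient F₂) (prefixSubspace d (ℓ₂ r)) (prefixSubspace d (ℓ₂ r)) :=
    (gradientPreservesPrefix_F₂_of_even (even_two_mul _) hF₂).mapsTo_gradient
  have hmem := mem_prefixSubspace_of_zeroRespecting (ℓ₁ := ℓ₁) (ℓ₂ := ℓ₂)
    (fun _ _ _ => by simp only [ℓ₁]; omega) (fun _ _ _ => by simp only [ℓ₂]; omega)
    (fun _ _ _ => by simp only [ℓ₁, ℓ₂]; omega) (fun _ _ _ => by simp only [ℓ₁, ℓ₂]; omega)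
    hg₁ hg₂ hmono hZR1 hZR2
  have hR₁ (s : ℕ) : prefixSubspace d (ℓ₁ (round s)) ≤ prefixSubspace d R :=
    prefixSubspace_mono (by have := hround s; simp only [ℓ₁]; omega)
  have hR₂ (s : ℕ) : prefixSubspace d (ℓ₂ (round s)) ≤ prefixSubspace d R :=
    prefixSubspace_mono (by have := hround s; simp only [ℓ₂]; omega)
  refine ⟨fun t i hi => ⟨hR₁ t (hmem t).1 i hi, hR₂ t (hmem t).2 i hi⟩, fun i hi => ?_⟩
  refine mem_prefixSubspace_of_forall_ne_zero (fun j hj => ?_) i hi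
  rcases hZRout j hj with ⟨s, hs⟩ | ⟨s, hs⟩
  · exact ⟨_, hR₁ s (hg₁ _ (hmem s).1), hs⟩
  · exact ⟨_, hR₂ s (hg₂ _ (hmem s).2), hs⟩

/-- For the hard pair `F₁, F₂`, any distributed zero-respecting algorithm on
two machines (machine 1 querying exact gradients of `F₁`, machine 2 of `F₂`, communicating at
the ends of its `R` rounds), initialized at zero, has all query points and its output in
`E_R = span{e₁, …, e_R}`: all coordinates beyond the `R`-th vanish. -/
theorem distributed_zero_respecting_span_lemma
    (d : ℕ) (hd : Even d)
    (H lam C β : ℝ) (hlam : 0 ≤ lam) (hH : lam < H)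
    -- `coord x k` is the `(k+1)`-st coordinate of `x` (i.e. `x_{k+1}` in 1-indexed notation)
    (coord : EuclideanSpace ℝ (Fin d) → ℕ → ℝ)
    (hcoord : ∀ (x : EuclideanSpace ℝ (Fin d)) (k : ℕ),
      coord x k = if h : k < d then x ⟨k, h⟩ else 0)
    (F₁ F₂ : EuclideanSpace ℝ (Fin d) → ℝ)
    (hF₁ : ∀ x, F₁ x = (H - lam) / 8 *
      ((coord x 0) ^ 2 - 2 * C * coord x 0 + β * (coord x (d - 1)) ^ 2 +
        ∑ i ∈ Finset.Icc 1 (d / 2 - 1), (coord x (2 * i) - coord x (2 * i - 1)) ^ 2) +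
      lam / 2 * ‖x‖ ^ 2)
    (hF₂ : ∀ x, F₂ x = (H - lam) / 8 *
      (∑ i ∈ Finset.Icc 1 (d / 2), (coord x (2 * i - 1) - coord x (2 * i - 2)) ^ 2) +
      lam / 2 * ‖x‖ ^ 2)
    -- the algorithm: query points `x1 t`, `x2 t` (the `t`-th query on machines 1 and 2),
    -- `round t` is the round during which the `t`-th query is made; there are `R` rounds
    (R : ℕ)
    (x1 x2 : ℕ → EuclideanSpace ℝ (Fin d))
    (xhat : EuclideanSpace ℝ (Fin d))
    (round : ℕ → ℕ) (hmono : Monotone round) (hround : ∀ t, round t < R)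
    -- the algorithm is distributed zero-respecting: each machine's queries are supported on
    -- coordinates where a previously seen gradient (its own, or one communicated from the
    -- other machine at the end of a strictly earlier round) was nonzero
    (hZR1 : ∀ (t : ℕ) (i : Fin d), x1 t i ≠ 0 →
      (∃ s, s < t ∧ gradient F₁ (x1 s) i ≠ 0) ∨
      (∃ s, round s < round t ∧ gradient F₂ (x2 s) i ≠ 0))
    (hZR2 : ∀ (t : ℕ) (i : Fin d), x2 t i ≠ 0 →
      (∃ s, s < t ∧ gradient F₂ (x2 s) i ≠ 0) ∨
      (∃ s, round s < round t ∧ gradient F₁ (x1 s) i ≠ 0))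
    -- the output, produced after the `R`-th communication, is zero-respecting
    (hZRout : ∀ i : Fin d, xhat i ≠ 0 →
      (∃ s, gradient F₁ (x1 s) i ≠ 0) ∨ (∃ s, gradient F₂ (x2 s) i ≠ 0)) :
    (∀ (t : ℕ) (i : Fin d), R ≤ (i : ℕ) → x1 t i = 0 ∧ x2 t i = 0) ∧
      (∀ i : Fin d, R ≤ (i : ℕ) → xhat i = 0) :=
  distributed_zero_respecting_span_lemma_general d H lam C β coord hcoord F₁ F₂ hF₁ hF₂ R x1 x2 xhat
    round hmono hround hZR1 hZR2 hZRout
end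

section
/- Let 0 < λ < H, set α = sqrt(1 + (H−λ)/(2λ)), q = (α−1)/(α+1), and β = 1−q, let C ∈ R and let d ≥ 2 be even. Define F(x) = ((H−λ)/16)·(x_1² − 2Cx_1 + βx_d² + Σ_{i=2}^{d}(x_i − x_{i−1})²) + (λ/2)‖x‖² on R^d. Then the point x* = C·Σ_{i=1}^d q^i·e_i satisfies ∇F(x*) = 0 and is the (unique) minimizer of F; moreover F(x*) = −qC²(H−λ)/16, the initial suboptimality satisfies F(0) − F(x*) = qC²(H−λ)/16, and ‖x*‖² = C²q²(1−q^{2d})/(1−q²) ≤ αC²/4. -/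
/-!
Write `T = (H - λ)/16` and `σ = 8λ/(H - λ)`, so that `F = T (B(x, x) - 2 C x₁)` for the symmetric
bilinear form `B(u, v) = u₁v₁ + β u_d v_d + Σ (u_{i+1} - u_i)(v_{i+1} - v_i) + σ Σ u_i v_i`.
The quadratic equation for `q` is exactly the interior stationarity equation of the geometric
sequence `x⋆_i = C qⁱ`, and `β = 1 - q` is the one at the last coordinate, so `B(u, x⋆) = C u₁`
for every `u`. Completing the square then gives `F(x) = T (B(x - x⋆, x - x⋆) - q C²)`, and
`B(z, z) ≥ σ ‖z‖²` makes `x⋆` the strict global minimizer.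
-/

open Finset

namespace HardQuadratic

def hardForm (β σ : ℝ) (n : ℕ) (u v : ℕ → ℝ) : ℝ :=
  u 0 * v 0 + β * (u n * v n) + ∑ j ∈ range n, (u (j + 1) - u j) * (v (j + 1) - v j)
    + σ * ∑ k ∈ range (n + 1), u k * v k

def hardObjective (β σ C : ℝ) (n : ℕ) (u : ℕ → ℝ) : ℝ :=
  hardForm β σ n u u - 2 * C * u 0

variable {β σ : ℝ} {n : ℕ}

theorem hardForm_comm (u v : ℕ → ℝ) : hardForm β σ n u v = hardForm β σ n v u := by
  simp only [hardForm, mul_comm]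

theorem hardForm_sub_left (u v w : ℕ → ℝ) :
    hardForm β σ n (u - v) w = hardForm β σ n u w - hardForm β σ n v w := by
  simp only [hardForm, Pi.sub_apply, sub_sub_sub_comm, sub_mul, sum_sub_distrib]
  ring

theorem hardForm_sub_sub (u v : ℕ → ℝ) :
    hardForm β σ n (u - v) (u - v)
      = hardForm β σ n u u - 2 * hardForm β σ n u v + hardForm β σ n v v := by
  rw [hardForm_sub_left, hardForm_comm u, hardForm_comm v, hardForm_sub_left,
    hardForm_sub_left, hardForm_comm v u]
  ring

theorem hardForm_self (u : ℕ → ℝ) :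
    hardForm β σ n u u = u 0 ^ 2 + β * u n ^ 2 + ∑ j ∈ range n, (u (j + 1) - u j) ^ 2
      + σ * ∑ k ∈ range (n + 1), u k ^ 2 := by
  simp only [hardForm, sq]

theorem mul_sum_sq_le_hardForm_self (hβ : 0 ≤ β) (u : ℕ → ℝ) :
    σ * ∑ k ∈ range (n + 1), u k ^ 2 ≤ hardForm β σ n u u := by
  rw [hardForm_self]
  have : 0 ≤ ∑ j ∈ range n, (u (j + 1) - u j) ^ 2 := sum_nonneg fun _ _ => sq_nonneg _
  nlinarith [sq_nonneg (u 0), sq_nonneg (u n)]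

/-- Passing from `n` to `n + 1` changes `hardForm u b` by a combination of `u n` and `u (n + 1)`
whose coefficients vanish: that of `u (n + 1)` by the quadratic equation for `q`, that of `u n`
because `β = 1 - q`. -/
theorem hardForm_geom_right (C q : ℝ) (hq : q * (2 + σ) - q ^ 2 = 1) (hβ : β = 1 - q)
    (b : ℕ → ℝ) (hb : ∀ k ≤ n, b k = C * q ^ (k + 1)) (u : ℕ → ℝ) :
    hardForm β σ n u b = C * u 0 := by
  subst hβ
  induction n with
  | zero =>
    simp only [hardForm, hb 0 le_rfl, range_zero, sum_empty, zero_add, sum_range_one]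
    linear_combination C * u 0 * hq
  | succ n ih =>
    have := ih fun k hk => hb k (by omega)
    simp only [hardForm, sum_range_succ, hb n (by omega), hb (n + 1) le_rfl] at this ⊢
    linear_combination this + C * q ^ (n + 1) * u (n + 1) * hq

theorem hardObjective_eq_hardForm_sub (C q : ℝ) (hq : q * (2 + σ) - q ^ 2 = 1) (hβ : β = 1 - q)
    (b : ℕ → ℝ) (hb : ∀ k ≤ n, b k = C * q ^ (k + 1)) (u : ℕ → ℝ) :
    hardObjective β σ C n u = hardForm β σ n (u - b) (u - b) - q * C ^ 2 := by
  rw [hardObjective, hardForm_sub_sub, hardForm_geom_right C q hq hβ b hb u,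
    hardForm_geom_right C q hq hβ b hb b, hb 0 (Nat.zero_le _)]
  ring

theorem hardObjective_eq_sum_Icc (C : ℝ) (u : ℕ → ℝ) :
    hardObjective β σ C n u = u 0 ^ 2 - 2 * C * u 0 + β * u n ^ 2
      + ∑ i ∈ Icc 2 (n + 1), (u (i - 1) - u (i - 2)) ^ 2 + σ * ∑ k ∈ range (n + 1), u k ^ 2 := by
  have hIcc : ∑ i ∈ Icc 2 (n + 1), (u (i - 1) - u (i - 2)) ^ 2
      = ∑ j ∈ range n, (u (j + 1) - u j) ^ 2 := by
    rw [← Ico_add_one_right_eq_Icc, sum_Ico_eq_sum_range]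
    refine sum_congr (by congr 1) fun j _ => ?_
    rw [show 2 + j - 1 = j + 1 by omega, show 2 + j - 2 = j by omega]
  rw [hardObjective, hardForm_self, hIcc]
  ring

def toSeq {d : ℕ} (x : EuclideanSpace ℝ (Fin d)) (k : ℕ) : ℝ :=
  if h : k < d then x ⟨k, h⟩ else 0

section toSeq

variable {d : ℕ}

theorem toSeq_apply_fin (x : EuclideanSpace ℝ (Fin d)) (i : Fin d) : toSeq x i = x i := by
  simp [toSeq, i.isLt]

theorem toSeq_sub (x y : EuclideanSpace ℝ (Fin d)) : toSeq (x - y) = toSeq x - toSeq y := by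
  funext k
  simp only [toSeq, Pi.sub_apply]
  split <;> simp

theorem toSeq_zero : toSeq (0 : EuclideanSpace ℝ (Fin d)) = 0 := by
  funext k
  simp [toSeq]

theorem norm_sq_eq_sum_toSeq (x : EuclideanSpace ℝ (Fin d)) :
    ‖x‖ ^ 2 = ∑ k ∈ range d, toSeq x k ^ 2 := by
  simp only [EuclideanSpace.real_norm_sq_eq, ← toSeq_apply_fin,
    Fin.sum_univ_eq_sum_range (fun k => toSeq x k ^ 2)]

theorem toSeq_of_geom {C q : ℝ} {x : EuclideanSpace ℝ (Fin d)}
    (hx : ∀ i : Fin d, x i = C * q ^ ((i : ℕ) + 1)) {k : ℕ} (hk : k < d) :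
    toSeq x k = C * q ^ (k + 1) := by
  simpa [← toSeq_apply_fin] using hx ⟨k, hk⟩

theorem norm_sq_of_geom {C q : ℝ} (hq : q ^ 2 ≠ 1) {x : EuclideanSpace ℝ (Fin d)}
    (hx : ∀ i : Fin d, x i = C * q ^ ((i : ℕ) + 1)) :
    ‖x‖ ^ 2 = C ^ 2 * q ^ 2 * (1 - q ^ (2 * d)) / (1 - q ^ 2) := by
  have (k : ℕ) (hk : k ∈ range d) : toSeq x k ^ 2 = C ^ 2 * q ^ 2 * (q ^ 2) ^ k := by
    rw [toSeq_of_geom hx (mem_range.1 hk)]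
    ring
  rw [norm_sq_eq_sum_toSeq, sum_congr rfl this, ← mul_sum, geom_sum_eq hq, pow_mul]
  field_simp [sub_ne_zero.2 hq, sub_ne_zero.2 hq.symm]
  ring

end toSeq

def hardQuad (β σ : ℝ) {n : ℕ} (z : EuclideanSpace ℝ (Fin (n + 1))) : ℝ :=
  hardForm β σ n (toSeq z) (toSeq z)

theorem hardQuad_zero : hardQuad β σ (0 : EuclideanSpace ℝ (Fin (n + 1))) = 0 := by
  simp [hardQuad, hardForm, toSeq_zero]

theorem mul_norm_sq_le_hardQuad (hβ : 0 ≤ β) (z : EuclideanSpace ℝ (Fin (n + 1))) :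
    σ * ‖z‖ ^ 2 ≤ hardQuad β σ z :=
  norm_sq_eq_sum_toSeq z ▸ mul_sum_sq_le_hardForm_self hβ _

end HardQuadratic

section SqGrowth

variable {E : Type*} [NormedAddCommGroup E] {f : E → ℝ} {x₀ : E} {c : ℝ}

theorem le_of_sq_growth (hc : 0 ≤ c) (h : ∀ x, c * ‖x - x₀‖ ^ 2 ≤ f x - f x₀) (y : E) :
    f x₀ ≤ f y :=
  sub_nonneg.1 <| (mul_nonneg hc (sq_nonneg _)).trans (h y)

theorem eq_of_sq_growth (hc : 0 < c) (h : ∀ x, c * ‖x - x₀‖ ^ 2 ≤ f x - f x₀) {y : E}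
    (hy : f y = f x₀) : y = x₀ := by
  have := h y
  rw [hy, sub_self] at this
  have : ‖y - x₀‖ ^ 2 ≤ 0 := by nlinarith
  simpa [sub_eq_zero] using this

end SqGrowth

section CayleyRatio

variable {α : ℝ}

theorem sub_one_div_add_one_lt_one (hα : 1 < α) : (α - 1) / (α + 1) < 1 := by
  rw [div_lt_one (by linarith)]
  linarith

theorem sub_one_div_add_one_quadratic {σ : ℝ} (hσ : σ * (α ^ 2 - 1) = 4) (hα : 1 < α) :
    (α - 1) / (α + 1) * (2 + σ) - ((α - 1) / (α + 1)) ^ 2 = 1 := by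
  field_simp
  linear_combination hσ

theorem geom_sq_sum_sub_one_div_add_one_le (hα : 1 < α) (C : ℝ) (d : ℕ) :
    C ^ 2 * ((α - 1) / (α + 1)) ^ 2 * (1 - ((α - 1) / (α + 1)) ^ (2 * d))
      / (1 - ((α - 1) / (α + 1)) ^ 2) ≤ α * C ^ 2 / 4 := by
  set q := (α - 1) / (α + 1) with hq
  have hden : 1 - q ^ 2 = 4 * α / (α + 1) ^ 2 := by rw [hq]; field_simp; ring
  have hratio : q ^ 2 / (1 - q ^ 2) ≤ α / 4 := by
    rw [hden, div_div_eq_mul_div, hq, div_pow, div_mul_cancel₀ _ (by positivity),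
      div_le_div_iff₀ (by positivity) (by norm_num)]
    nlinarith
  have htail : 0 ≤ C ^ 2 * q ^ 2 * q ^ (2 * d) := by positivity
  calc C ^ 2 * q ^ 2 * (1 - q ^ (2 * d)) / (1 - q ^ 2) ≤ C ^ 2 * q ^ 2 / (1 - q ^ 2) :=
        div_le_div_of_nonneg_right (by linarith) (hden ▸ by positivity)
    _ = C ^ 2 * (q ^ 2 / (1 - q ^ 2)) := mul_div_assoc _ _ _
    _ ≤ C ^ 2 * (α / 4) := mul_le_mul_of_nonneg_left hratio (sq_nonneg C)
    _ = α * C ^ 2 / 4 := by ring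

end CayleyRatio

open HardQuadratic

theorem hard_instance_minimizer_general
    (d : ℕ) (hd2 : 2 ≤ d)
    (H lam C : ℝ) (hlam : 0 < lam) (hH : lam < H)
    (α q β : ℝ)
    (hα : α = Real.sqrt (1 + (H - lam) / (2 * lam)))
    (hq : q = (α - 1) / (α + 1))
    (hβ : β = 1 - q)
    -- `coord x k` is the `(k+1)`-st coordinate of `x` (i.e. `x_{k+1}` in 1-indexed notation)
    (coord : EuclideanSpace ℝ (Fin d) → ℕ → ℝ)
    (hcoord : ∀ (x : EuclideanSpace ℝ (Fin d)) (k : ℕ),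
      coord x k = if h : k < d then x ⟨k, h⟩ else 0)
    (F : EuclideanSpace ℝ (Fin d) → ℝ)
    (hF : ∀ x, F x = (H - lam) / 16 *
      ((coord x 0) ^ 2 - 2 * C * coord x 0 + β * (coord x (d - 1)) ^ 2 +
        ∑ i ∈ Finset.Icc 2 d, (coord x (i - 1) - coord x (i - 2)) ^ 2) +
      lam / 2 * ‖x‖ ^ 2)
    (xstar : EuclideanSpace ℝ (Fin d))
    (hxstar : ∀ i : Fin d, xstar i = C * q ^ ((i : ℕ) + 1)) :
    gradient F xstar = 0 ∧
      (∀ y, F xstar ≤ F y) ∧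
      (∀ y, F y = F xstar → y = xstar) ∧
      F xstar = -(q * C ^ 2 * (H - lam)) / 16 ∧
      F 0 - F xstar = q * C ^ 2 * (H - lam) / 16 ∧
      ‖xstar‖ ^ 2 = C ^ 2 * q ^ 2 * (1 - q ^ (2 * d)) / (1 - q ^ 2) ∧
      ‖xstar‖ ^ 2 ≤ α * C ^ 2 / 4 := by
  obtain ⟨n, rfl⟩ : ∃ n, d = n + 1 := ⟨d - 1, by omega⟩
  obtain rfl : coord = toSeq := funext fun x => funext (hcoord x)
  have hHl : 0 < H - lam := sub_pos.2 hH
  have hα1 : 1 < α := by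
    rw [hα, Real.lt_sqrt zero_le_one, one_pow, lt_add_iff_pos_right]
    positivity
  have hq0 : 0 ≤ q := hq ▸ div_nonneg (by linarith) (by linarith)
  have hq1 : q < 1 := hq ▸ sub_one_div_add_one_lt_one hα1
  have hquad : q * (2 + 8 * lam / (H - lam)) - q ^ 2 = 1 := hq ▸ sub_one_div_add_one_quadratic
    (by rw [hα, Real.sq_sqrt (by positivity)]; field_simp; ring) hα1
  have hFQ (x : EuclideanSpace ℝ (Fin (n + 1))) :
      F x = (H - lam) / 16 * (hardQuad β (8 * lam / (H - lam)) (x - xstar) - q * C ^ 2) := by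
    rw [hardQuad, toSeq_sub,
      ← hardObjective_eq_hardForm_sub C q hquad hβ _ fun k hk => toSeq_of_geom hxstar (by omega), hF, hardObjective_eq_sum_Icc, norm_sq_eq_sum_toSeq, Nat.add_sub_cancel]
    field_simp
    ring
  have hFstar : F xstar = -(q * C ^ 2 * (H - lam)) / 16 := by
    rw [hFQ, sub_self, hardQuad_zero]
    ring
  have hgrowth (x : EuclideanSpace ℝ (Fin (n + 1))) : lam / 2 * ‖x - xstar‖ ^ 2 ≤ F x - F xstar :=
    calc lam / 2 * ‖x - xstar‖ ^ 2
        = (H - lam) / 16 * (8 * lam / (H - lam) * ‖x - xstar‖ ^ 2) := by field_simp; ring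
      _ ≤ (H - lam) / 16 * hardQuad β (8 * lam / (H - lam)) (x - xstar) := by
        gcongr
        exact mul_norm_sq_le_hardQuad (by linarith) _
      _ = F x - F xstar := by rw [hFQ x, hFstar]; ring
  have hmin := le_of_sq_growth (by positivity) hgrowth
  have hnorm_star := norm_sq_of_geom (by nlinarith) hxstar
  refine ⟨?_, hmin, fun y => eq_of_sq_growth (by positivity) hgrowth, hFstar, ?_, hnorm_star, ?_⟩
  · simp [gradient, IsLocalMin.fderiv_eq_zero (Filter.Eventually.of_forall hmin)]
  · rw [hF, toSeq_zero, hFstar]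
    simp only [Pi.zero_apply, sub_self, zero_pow two_ne_zero, sum_const_zero, norm_zero]
    ring
  · rw [hnorm_star, hq]
    exact geom_sq_sum_sub_one_div_add_one_le hα1 C _

/-- For the hard quadratic `F`, the point `x⋆ = C Σ_i qⁱ e_i` is a critical
point and the unique minimizer of `F`, with `F(x⋆) = -qC²(H-λ)/16`,
`F(0) - F(x⋆) = qC²(H-λ)/16`, and `‖x⋆‖² = C²q²(1-q^{2d})/(1-q²) ≤ αC²/4`. -/
theorem hard_instance_minimizer
    (d : ℕ) (hd : Even d) (hd2 : 2 ≤ d)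
    (H lam C : ℝ) (hlam : 0 < lam) (hH : lam < H)
    (α q β : ℝ)
    (hα : α = Real.sqrt (1 + (H - lam) / (2 * lam)))
    (hq : q = (α - 1) / (α + 1))
    (hβ : β = 1 - q)
    -- `coord x k` is the `(k+1)`-st coordinate of `x` (i.e. `x_{k+1}` in 1-indexed notation)
    (coord : EuclideanSpace ℝ (Fin d) → ℕ → ℝ)
    (hcoord : ∀ (x : EuclideanSpace ℝ (Fin d)) (k : ℕ),
      coord x k = if h : k < d then x ⟨k, h⟩ else 0)
    (F : EuclideanSpace ℝ (Fin d) → ℝ)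
    (hF : ∀ x, F x = (H - lam) / 16 *
      ((coord x 0) ^ 2 - 2 * C * coord x 0 + β * (coord x (d - 1)) ^ 2 +
        ∑ i ∈ Finset.Icc 2 d, (coord x (i - 1) - coord x (i - 2)) ^ 2) +
      lam / 2 * ‖x‖ ^ 2)
    (xstar : EuclideanSpace ℝ (Fin d))
    (hxstar : ∀ i : Fin d, xstar i = C * q ^ ((i : ℕ) + 1)) :
    gradient F xstar = 0 ∧
      (∀ y, F xstar ≤ F y) ∧
      (∀ y, F y = F xstar → y = xstar) ∧
      F xstar = -(q * C ^ 2 * (H - lam)) / 16 ∧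
      F 0 - F xstar = q * C ^ 2 * (H - lam) / 16 ∧
      ‖xstar‖ ^ 2 = C ^ 2 * q ^ 2 * (1 - q ^ (2 * d)) / (1 - q ^ 2) ∧
      ‖xstar‖ ^ 2 ≤ α * C ^ 2 / 4 :=
  hard_instance_minimizer_general d hd2 H lam C hlam hH α q β hα hq hβ coord hcoord F hF xstar
    hxstar
end

section
/- Let 0 < λ < H, α = sqrt(1 + (H−λ)/(2λ)), q = (α−1)/(α+1), β = 1−q, C ∈ R, and d ≥ 2 even, and let F(x) = ((H−λ)/16)·(x_1² − 2Cx_1 + βx_d² + Σ_{i=2}^{d}(x_i − x_{i−1})²) + (λ/2)‖x‖² with minimizer x* = C·Σ_{i=1}^d q^i·e_i and F* = F(x*). Then for any R < d and any point x̂ ∈ E_R = span{e_1,…,e_R} (i.e. whose coordinates beyond the R-th vanish): F(x̂) − F* ≥ (λ/2)·‖x̂ − x*‖² ≥ (F(0) − F*)·(q^{2R} − q^{2d})/α. In particular, if d ≥ R + 1/(2·ln(1/q)), then F(x̂) − F* ≥ (F(0) − F*)·q^{2R}/(2α). -/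
/-!
Write `t = (H - λ)/16`. The choice of `α` and `q` amounts to `λ q = 2 t (1 - q)²`, and with this
relation a summation by parts shows that the first variation of `F` at `x⋆` vanishes, so that
`F x - F x⋆ = t Q(x - x⋆) + (λ/2)‖x - x⋆‖²`, where `Q` is the (positive semidefinite) quadratic
part of `F / t`; taking `x = 0` gives `F 0 - F x⋆ = t q C²`. A point of `E_R` misses the tail
`∑_{k > R} (C q^k)²` of `x⋆` entirely, and this geometric tail is the second bound. Finally
`2 (d - R) log (1/q) ≥ 1` gives `q^{2(d - R)} ≤ e⁻¹ ≤ 1/2`.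
-/

open Finset

namespace HardQuadratic

/-- The bilinear form of `x₁² + β x_d² + ∑ (x_i - x_{i-1})²`, on sequences indexed from `0`,
with `m = d - 1` the last index. -/
def chainForm (β : ℝ) (m : ℕ) (u v : ℕ → ℝ) : ℝ :=
  u 0 * v 0 + β * (u m * v m) + ∑ j ∈ range m, (u (j + 1) - u j) * (v (j + 1) - v j)

noncomputable def objective (t β C lam : ℝ) (m : ℕ) (u : ℕ → ℝ) : ℝ :=
  t * (chainForm β m u u - 2 * C * u 0) + lam / 2 * ∑ k ∈ range (m + 1), u k ^ 2

section Sequences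

variable {β : ℝ} {m : ℕ}

lemma chainForm_comm (u v : ℕ → ℝ) : chainForm β m u v = chainForm β m v u := by
  simp only [chainForm, mul_comm]

lemma chainForm_add_left (u v w : ℕ → ℝ) :
    chainForm β m (u + v) w = chainForm β m u w + chainForm β m v w := by
  simp only [chainForm, Pi.add_apply, add_sub_add_comm, add_mul, sum_add_distrib]
  ring

lemma chainForm_add_add_self (u v : ℕ → ℝ) :
    chainForm β m (u + v) (u + v) =
      chainForm β m u u + 2 * chainForm β m u v + chainForm β m v v := by
  rw [chainForm_add_left, chainForm_comm u, chainForm_comm v, chainForm_add_left,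
    chainForm_add_left, chainForm_comm v u]
  ring

lemma chainForm_self_nonneg (hβ : 0 ≤ β) (u : ℕ → ℝ) : 0 ≤ chainForm β m u u := by
  have hdiff := sum_nonneg fun j (_ : j ∈ range m) => mul_self_nonneg (u (j + 1) - u j)
  have hlast := mul_nonneg hβ (mul_self_nonneg (u m))
  unfold chainForm
  linarith [mul_self_nonneg (u 0)]

lemma sum_range_pow_mul_sub (q : ℝ) (h : ℕ → ℝ) (m : ℕ) :
    ∑ j ∈ range m, q ^ (j + 1) * (h (j + 1) - h j) =
      (1 - q) * ∑ k ∈ range (m + 1), q ^ k * h k - h 0 + q ^ (m + 1) * h m := by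
  induction m with
  | zero => simp only [sum_range_zero, sum_range_one, pow_zero, zero_add, pow_one]; ring
  | succ m ih => rw [sum_range_succ, ih, sum_range_succ _ (m + 1)]; ring

variable {t C lam q : ℝ} (hlam : lam * q = 2 * t * (1 - q) ^ 2) {s : ℕ → ℝ}
  (hs : ∀ k ≤ m, s k = C * q ^ (k + 1))
include hlam hs

lemma first_variation_eq_zero (h : ℕ → ℝ) :
    2 * t * (chainForm (1 - q) m s h - C * h 0) + lam * ∑ k ∈ range (m + 1), s k * h k = 0 := by
  have hdiff : ∑ j ∈ range m, (s (j + 1) - s j) * (h (j + 1) - h j) =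
      C * (q - 1) * ∑ j ∈ range m, q ^ (j + 1) * (h (j + 1) - h j) := by
    rw [mul_sum]
    refine sum_congr rfl fun j hj => ?_
    rw [mem_range] at hj
    rw [hs (j + 1) hj, hs j hj.le]
    ring
  have hlin : ∑ k ∈ range (m + 1), s k * h k = C * q * ∑ k ∈ range (m + 1), q ^ k * h k := by
    rw [mul_sum]
    refine sum_congr rfl fun k hk => ?_
    rw [hs k (Nat.lt_succ_iff.mp (mem_range.mp hk))]
    ring
  rw [chainForm, hdiff, sum_range_pow_mul_sub, hlin, hs 0 (Nat.zero_le _), hs m le_rfl]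
  linear_combination (C * ∑ k ∈ range (m + 1), q ^ k * h k) * hlam

lemma objective_sub_objective (u : ℕ → ℝ) :
    objective t (1 - q) C lam m u - objective t (1 - q) C lam m s =
      t * chainForm (1 - q) m (u - s) (u - s) +
        lam / 2 * ∑ k ∈ range (m + 1), (u k - s k) ^ 2 := by
  have hvar := first_variation_eq_zero hlam hs (u - s)
  have hquad : chainForm (1 - q) m u u = chainForm (1 - q) m s s +
      2 * chainForm (1 - q) m s (u - s) + chainForm (1 - q) m (u - s) (u - s) := by
    simpa using chainForm_add_add_self (β := 1 - q) (m := m) s (u - s)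
  have hnorm : ∑ k ∈ range (m + 1), u k ^ 2 = ∑ k ∈ range (m + 1), s k ^ 2 +
      2 * ∑ k ∈ range (m + 1), s k * (u - s) k + ∑ k ∈ range (m + 1), (u k - s k) ^ 2 := by
    rw [mul_sum, ← sum_add_distrib, ← sum_add_distrib]
    exact sum_congr rfl fun k _ => by simp only [Pi.sub_apply]; ring
  rw [objective, objective, hnorm, hquad]
  simp only [Pi.sub_apply] at hvar ⊢
  linear_combination hvar

lemma objective_zero_sub_objective :
    objective t (1 - q) C lam m 0 - objective t (1 - q) C lam m s = t * q * C ^ 2 := by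
  have hvar := first_variation_eq_zero hlam hs s
  have hzero : objective t (1 - q) C lam m 0 = 0 := by simp [objective, chainForm]
  simp only [← sq] at hvar
  rw [hs 0 (Nat.zero_le _)] at hvar
  rw [hzero, objective, hs 0 (Nat.zero_le _)]
  linear_combination -hvar / 2

omit hlam in
lemma geom_tail_le_sum_sq_sub (hq : q ^ 2 ≠ 1) {R : ℕ} (hRm : R ≤ m + 1) {u : ℕ → ℝ}
    (hu : ∀ k, R ≤ k → u k = 0) :
    C ^ 2 * q ^ 2 * (q ^ (2 * R) - q ^ (2 * (m + 1))) / (1 - q ^ 2) ≤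
      ∑ k ∈ range (m + 1), (u k - s k) ^ 2 := by
  have htail : ∑ k ∈ Ico R (m + 1), (u k - s k) ^ 2 =
      C ^ 2 * q ^ 2 * ∑ k ∈ Ico R (m + 1), (q ^ 2) ^ k := by
    rw [mul_sum]
    refine sum_congr rfl fun k hk => ?_
    rw [mem_Ico] at hk
    rw [hu k hk.1, hs k (by omega)]
    ring
  calc _ = ∑ k ∈ Ico R (m + 1), (u k - s k) ^ 2 := by
        rw [htail, geom_sum_Ico' hq hRm, pow_mul, pow_mul]; ring
    _ ≤ _ := sum_le_sum_of_subset_of_nonneg (fun k hk => by simp at hk ⊢; omega)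
        fun _ _ _ => sq_nonneg _

end Sequences

lemma q_spec {H lam α q : ℝ} (hlam : 0 < lam) (hH : lam < H)
    (hα : α = √(1 + (H - lam) / (2 * lam))) (hq : q = (α - 1) / (α + 1)) :
    0 < q ∧ q < 1 ∧ α * (1 - q) = 1 + q ∧ lam * q = 2 * ((H - lam) / 16) * (1 - q) ^ 2 := by
  have hgap : 0 < (H - lam) / (2 * lam) := div_pos (by linarith) (by positivity)
  have hα2 : α ^ 2 = 1 + (H - lam) / (2 * lam) := hα ▸ Real.sq_sqrt (by positivity)
  have hα1 : 1 < α := hα ▸ (Real.lt_sqrt zero_le_one).mpr (by linarith)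
  subst hq
  refine ⟨div_pos (by linarith) (by linarith), (div_lt_one (by linarith)).mpr (by linarith),
    by field_simp; ring, ?_⟩
  field_simp at hα2 ⊢
  linear_combination 8 * hα2

lemma mul_div_eq_of_q_spec {t lam q α : ℝ} (hq0 : 0 < q) (hq1 : q < 1)
    (hαq : α * (1 - q) = 1 + q) (hlam : lam * q = 2 * t * (1 - q) ^ 2) (C X : ℝ) :
    t * q * C ^ 2 * X / α = lam / 2 * (C ^ 2 * q ^ 2 * X / (1 - q ^ 2)) := by
  have h1 : 1 - q ≠ 0 := by linarith
  have h2 : 1 + q ≠ 0 := by linarith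
  rw [eq_div_of_mul_eq h1 hαq, show 1 - q ^ 2 = (1 - q) * (1 + q) by ring]
  field_simp
  linear_combination -(C ^ 2 * X) * hlam

def zeroExtend {d : ℕ} (x : EuclideanSpace ℝ (Fin d)) (k : ℕ) : ℝ :=
  if h : k < d then x ⟨k, h⟩ else 0

lemma zeroExtend_sub {d : ℕ} (x y : EuclideanSpace ℝ (Fin d)) :
    zeroExtend (x - y) = zeroExtend x - zeroExtend y := by
  ext k
  by_cases hk : k < d <;> simp [zeroExtend, hk]

lemma zeroExtend_zero {d : ℕ} : zeroExtend (0 : EuclideanSpace ℝ (Fin d)) = 0 := by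
  ext k
  by_cases hk : k < d <;> simp [zeroExtend, hk]

lemma norm_sq_eq_sum_zeroExtend {d : ℕ} (x : EuclideanSpace ℝ (Fin d)) :
    ‖x‖ ^ 2 = ∑ k ∈ range d, zeroExtend x k ^ 2 := by
  rw [EuclideanSpace.norm_sq_eq, ← Fin.sum_univ_eq_sum_range]
  simp [zeroExtend]

lemma sum_Icc_two_sub (f : ℕ → ℕ → ℝ) (m : ℕ) :
    ∑ i ∈ Icc 2 (m + 1), f (i - 1) (i - 2) = ∑ j ∈ range m, f (j + 1) j := by
  rw [← Ico_add_one_right_eq_Icc, sum_Ico_eq_sum_range, show m + 1 + 1 - 2 = m by omega]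
  exact sum_congr rfl fun j _ => by rw [show 2 + j - 1 = j + 1 by omega, show 2 + j - 2 = j by omega]

lemma objective_zeroExtend (t β C lam : ℝ) {m : ℕ} (x : EuclideanSpace ℝ (Fin (m + 1))) :
    objective t β C lam m (zeroExtend x) = t * (zeroExtend x 0 ^ 2 - 2 * C * zeroExtend x 0 +
      β * zeroExtend x (m + 1 - 1) ^ 2 +
        ∑ i ∈ Icc 2 (m + 1), (zeroExtend x (i - 1) - zeroExtend x (i - 2)) ^ 2) +
      lam / 2 * ‖x‖ ^ 2 := by
  rw [objective, chainForm, sum_Icc_two_sub (fun a b => (zeroExtend x a - zeroExtend x b) ^ 2),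
    norm_sq_eq_sum_zeroExtend, Nat.add_sub_cancel]
  simp only [sq]
  ring

end HardQuadratic

lemma pow_two_mul_le_half {q : ℝ} (hq0 : 0 < q) {n : ℕ} (hn : 1 ≤ 2 * n * Real.log (1 / q)) :
    q ^ (2 * n) ≤ 1 / 2 := by
  have hexp : q ^ (2 * n) = Real.exp (-(2 * n * Real.log (1 / q))) := by
    rw [one_div, Real.log_inv, mul_neg, neg_neg, ← Real.exp_log hq0, ← Real.exp_nat_mul,
      Real.log_exp]
    push_cast; ring_nf
  calc q ^ (2 * n) ≤ Real.exp (-1) := hexp ▸ Real.exp_le_exp.mpr (by linarith)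
    _ ≤ 1 / 2 := by
      rw [Real.exp_neg, one_div]
      exact inv_anti₀ two_pos (by linarith [Real.add_one_le_exp 1])

lemma pow_le_half_of_add_inv_log_le {q : ℝ} (hq0 : 0 < q) (hq1 : q < 1) {R d : ℕ}
    (h : (R : ℝ) + 1 / (2 * Real.log (1 / q)) ≤ d) : q ^ (2 * d) ≤ q ^ (2 * R) / 2 := by
  have hL : 0 < Real.log (1 / q) := Real.log_pos (by rw [one_div]; exact (one_lt_inv₀ hq0).mpr hq1)
  obtain ⟨n, rfl⟩ : ∃ n, d = R + n :=
    Nat.exists_eq_add_of_le (by exact_mod_cast (lt_add_of_pos_right _ (by positivity)).le.trans h)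
  have hn : 1 ≤ 2 * n * Real.log (1 / q) := by
    push_cast at h
    have := (div_le_iff₀ (by positivity)).mp (le_sub_iff_add_le'.mpr h)
    linarith
  calc q ^ (2 * (R + n)) = q ^ (2 * R) * q ^ (2 * n) := by rw [mul_add, pow_add]
    _ ≤ q ^ (2 * R) * (1 / 2) := by gcongr; exact pow_two_mul_le_half hq0 hn
    _ = q ^ (2 * R) / 2 := by ring

open HardQuadratic

theorem hard_instance_span_suboptimality_general
    (d : ℕ)
    (H lam C : ℝ) (hlam : 0 < lam) (hH : lam < H)
    (α q β : ℝ)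
    (hα : α = Real.sqrt (1 + (H - lam) / (2 * lam)))
    (hq : q = (α - 1) / (α + 1))
    (hβ : β = 1 - q)
    (coord : EuclideanSpace ℝ (Fin d) → ℕ → ℝ)
    (hcoord : ∀ (x : EuclideanSpace ℝ (Fin d)) (k : ℕ),
      coord x k = if h : k < d then x ⟨k, h⟩ else 0)
    (F : EuclideanSpace ℝ (Fin d) → ℝ)
    (hF : ∀ x, F x = (H - lam) / 16 *
      ((coord x 0) ^ 2 - 2 * C * coord x 0 + β * (coord x (d - 1)) ^ 2 +
        ∑ i ∈ Finset.Icc 2 d, (coord x (i - 1) - coord x (i - 2)) ^ 2) +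
      lam / 2 * ‖x‖ ^ 2)
    (xstar : EuclideanSpace ℝ (Fin d))
    (hxstar : ∀ i : Fin d, xstar i = C * q ^ ((i : ℕ) + 1))
    (R : ℕ) (hR : R < d)
    (xhat : EuclideanSpace ℝ (Fin d))
    (hxhat : ∀ i : Fin d, R ≤ (i : ℕ) → xhat i = 0) :
    F xhat - F xstar ≥ lam / 2 * ‖xhat - xstar‖ ^ 2 ∧
      lam / 2 * ‖xhat - xstar‖ ^ 2 ≥ (F 0 - F xstar) * (q ^ (2 * R) - q ^ (2 * d)) / α ∧
      ((R : ℝ) + 1 / (2 * Real.log (1 / q)) ≤ d →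
        F xhat - F xstar ≥ (F 0 - F xstar) * q ^ (2 * R) / (2 * α)) := by
  obtain ⟨m, rfl⟩ : ∃ m, d = m + 1 := ⟨d - 1, by omega⟩
  obtain rfl : coord = zeroExtend := funext fun x => funext (hcoord x)
  obtain ⟨hq0, hq1, hαq, hlamq⟩ := q_spec hlam hH hα hq
  have hFobj (x) : F x = objective ((H - lam) / 16) (1 - q) C lam m (zeroExtend x) := by
    rw [hF, objective_zeroExtend, hβ]
  have hs (k) (hk : k ≤ m) : zeroExtend xstar k = C * q ^ (k + 1) := by
    simp [zeroExtend, Nat.lt_succ_of_le hk, hxstar]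
  have hu (k) (hk : R ≤ k) : zeroExtend xhat k = 0 := by
    unfold zeroExtend; split_ifs; exacts [hxhat _ hk, rfl]
  have hF0 : F 0 - F xstar = (H - lam) / 16 * q * C ^ 2 := by
    rw [hFobj, hFobj, zeroExtend_zero, objective_zero_sub_objective hlamq hs]
  have part1 : F xhat - F xstar ≥ lam / 2 * ‖xhat - xstar‖ ^ 2 := by
    rw [hFobj, hFobj, objective_sub_objective hlamq hs, norm_sq_eq_sum_zeroExtend, zeroExtend_sub]
    have hQ := mul_nonneg (by linarith : 0 ≤ (H - lam) / 16)
      (chainForm_self_nonneg (m := m) (by linarith : 0 ≤ 1 - q) (zeroExtend xhat - zeroExtend xstar))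
    simp only [Pi.sub_apply]
    linarith
  have part2 : lam / 2 * ‖xhat - xstar‖ ^ 2 ≥
      (F 0 - F xstar) * (q ^ (2 * R) - q ^ (2 * (m + 1))) / α := by
    rw [hF0, mul_div_eq_of_q_spec hq0 hq1 hαq hlamq]
    gcongr
    rw [norm_sq_eq_sum_zeroExtend, zeroExtend_sub]
    exact geom_tail_le_sum_sq_sub hs (by nlinarith) hR.le hu
  refine ⟨part1, part2, fun hlog => ?_⟩
  have hhalf := pow_le_half_of_add_inv_log_le hq0 hq1 hlog
  have hF0_nonneg : 0 ≤ F 0 - F xstar :=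
    hF0 ▸ mul_nonneg (mul_nonneg (by linarith) hq0.le) (sq_nonneg C)
  have hα0 : 0 < α := by nlinarith
  calc (F 0 - F xstar) * q ^ (2 * R) / (2 * α)
      = (F 0 - F xstar) * (q ^ (2 * R) - q ^ (2 * R) / 2) / α := by field_simp; ring
    _ ≤ (F 0 - F xstar) * (q ^ (2 * R) - q ^ (2 * (m + 1))) / α := by gcongr
    _ ≤ lam / 2 * ‖xhat - xstar‖ ^ 2 := part2
    _ ≤ F xhat - F xstar := part1

/-- Suboptimality of points supported on the first `R` coordinates for the
hard quadratic `F`: for any `x̂ ∈ E_R` with `R < d`,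
`F(x̂) - F⋆ ≥ (λ/2)‖x̂ - x⋆‖² ≥ (F(0) - F⋆)(q^{2R} - q^{2d})/α`, and if
`d ≥ R + 1/(2 ln(1/q))` then `F(x̂) - F⋆ ≥ (F(0) - F⋆) q^{2R}/(2α)`. -/
theorem hard_instance_span_suboptimality
    (d : ℕ) (hd : Even d) (hd2 : 2 ≤ d)
    (H lam C : ℝ) (hlam : 0 < lam) (hH : lam < H)
    (α q β : ℝ)
    (hα : α = Real.sqrt (1 + (H - lam) / (2 * lam)))
    (hq : q = (α - 1) / (α + 1))
    (hβ : β = 1 - q)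
    (coord : EuclideanSpace ℝ (Fin d) → ℕ → ℝ)
    (hcoord : ∀ (x : EuclideanSpace ℝ (Fin d)) (k : ℕ),
      coord x k = if h : k < d then x ⟨k, h⟩ else 0)
    (F : EuclideanSpace ℝ (Fin d) → ℝ)
    (hF : ∀ x, F x = (H - lam) / 16 *
      ((coord x 0) ^ 2 - 2 * C * coord x 0 + β * (coord x (d - 1)) ^ 2 +
        ∑ i ∈ Finset.Icc 2 d, (coord x (i - 1) - coord x (i - 2)) ^ 2) +
      lam / 2 * ‖x‖ ^ 2)
    (xstar : EuclideanSpace ℝ (Fin d))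
    (hxstar : ∀ i : Fin d, xstar i = C * q ^ ((i : ℕ) + 1))
    (R : ℕ) (hR : R < d)
    (xhat : EuclideanSpace ℝ (Fin d))
    (hxhat : ∀ i : Fin d, R ≤ (i : ℕ) → xhat i = 0) :
    F xhat - F xstar ≥ lam / 2 * ‖xhat - xstar‖ ^ 2 ∧
      lam / 2 * ‖xhat - xstar‖ ^ 2 ≥ (F 0 - F xstar) * (q ^ (2 * R) - q ^ (2 * d)) / α ∧
      ((R : ℝ) + 1 / (2 * Real.log (1 / q)) ≤ d →
        F xhat - F xstar ≥ (F 0 - F xstar) * q ^ (2 * R) / (2 * α)) :=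
  hard_instance_span_suboptimality_general d H lam C hlam hH α q β hα hq hβ coord hcoord F hF xstar
    hxstar R hR xhat hxhat
end
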